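/- The energy function is a Lyapunov function for the OIM dynamics: if θ : ℝ → ℝ^N is differentiable with θ'(t) = f(θ(t)) for all t, then the map t ↦ E(θ(t)) is monotonically nonincreasing on ℝ. -/

import Mathlib

/-- The OIM energy (Lyapunov) function
`E(θ) = -K ∑_{i ≠ j} W i j cos(θ i - θ j) - K_s ∑ i cos(2 θ i)`. -/
noncomputable def oimEnergy (N : ℕ) (W : Fin N → Fin N → ℝ) (K Ks : ℝ)
    (θ : Fin N → ℝ) : ℝ :=
  -K * ∑ i, ∑ j ∈ Finset.univ.filter (fun j => j ≠ i), W i j * Real.cos (θ i - θ j)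
    - Ks * ∑ i, Real.cos (2 * θ i)

/-- The OIM vector field
`f(θ) i = -K ∑_{j ≠ i} W i j sin(θ i - θ j) - K_s sin(2 θ i)`. -/
noncomputable def oimField (N : ℕ) (W : Fin N → Fin N → ℝ) (K Ks : ℝ)
    (θ : Fin N → ℝ) : Fin N → ℝ :=
  fun i => -K * ∑ j ∈ Finset.univ.filter (fun j => j ≠ i), W i j * Real.sin (θ i - θ j)
    - Ks * Real.sin (2 * θ i)

/-! Along any curve, `d/dt E(θ(t)) = ⟨∇E(θ), θ'⟩` with `∇E = -2 f`, so along a solution of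
`θ' = f(θ)` the energy decreases at rate `2 ‖f(θ)‖²`. The factor `2` comes from each pair
`{i, j}` occurring twice in the double sum, which is where the symmetry of `W` enters. -/

open Finset Real

theorem Finset.sum_sum_mul_sub_of_antisymm {ι R : Type*} [Fintype ι] [CommRing R]
    (a : ι → ι → R) (ha : ∀ i j, a j i = -a i j) (v : ι → R) :
    ∑ i, ∑ j, a i j * (v i - v j) = 2 * ∑ i, (∑ j, a i j) * v i := by
  have hswap : ∑ i, ∑ j, a i j * v j = -∑ i, (∑ j, a i j) * v i := by
    rw [sum_comm, ← sum_neg_distrib]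
    refine sum_congr rfl fun i _ => ?_
    rw [sum_mul, ← sum_neg_distrib]
    exact sum_congr rfl fun j _ => by rw [ha]; ring
  simp only [mul_sub, sum_sub_distrib, hswap, ← sum_mul]
  ring

theorem Finset.sum_filter_ne_eq_sum {ι M : Type*} [Fintype ι] [DecidableEq ι] [AddCommMonoid M]
    {f : ι → M} {i : ι} (hf : f i = 0) :
    ∑ j ∈ univ.filter (fun j => j ≠ i), f j = ∑ j, f j :=
  sum_filter_of_ne fun _ _ hj hji => hj (hji ▸ hf)

theorem hasDerivAt_oimEnergy_comp {N : ℕ} {W : Fin N → Fin N → ℝ} (K Ks : ℝ)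
    (hsymm : ∀ i j, W i j = W j i) {γ : ℝ → Fin N → ℝ}
    {v : Fin N → ℝ} {t : ℝ} (hγ : HasDerivAt γ v t) :
    HasDerivAt (fun s => oimEnergy N W K Ks (γ s))
      (-2 * ∑ i, oimField N W K Ks (γ t) i * v i) t := by
  have hγi : ∀ i, HasDerivAt (fun s => γ s i) (v i) t := hasDerivAt_pi.mp hγ
  have hself : HasDerivAt (fun s => ∑ i, cos (2 * γ s i))
      (-2 * ∑ i, sin (2 * γ t i) * v i) t := by
    refine (HasDerivAt.fun_sum fun i _ => ((hγi i).const_mul 2).cos).congr_deriv ?_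
    rw [mul_sum]
    exact sum_congr rfl fun i _ => by ring
  set x := γ t
  have hdouble := sum_sum_mul_sub_of_antisymm (fun i j => W i j * sin (x i - x j))
    (fun i j => by rw [hsymm, ← neg_sub, sin_neg, mul_neg]) v
  have hpair : HasDerivAt (fun s => ∑ i, ∑ j ∈ univ.filter (fun j => j ≠ i),
      W i j * cos (γ s i - γ s j)) (-∑ i, ∑ j, W i j * sin (x i - x j) * (v i - v j)) t := by
    refine (HasDerivAt.fun_sum fun i _ => HasDerivAt.fun_sum fun j _ =>
      (((hγi i).fun_sub (hγi j)).cos).const_mul (W i j)).congr_deriv ?_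
    rw [← sum_neg_distrib]
    refine sum_congr rfl fun i _ => ?_
    rw [sum_filter_ne_eq_sum (by simp), ← sum_neg_distrib]
    exact sum_congr rfl fun j _ => by ring
  have hfield : ∀ i, oimField N W K Ks x i =
      -K * ∑ j, W i j * sin (x i - x j) - Ks * sin (2 * x i) :=
    fun i => by rw [oimField, sum_filter_ne_eq_sum (by simp)]
  refine ((hpair.const_mul (-K)).sub (hself.const_mul Ks)).congr_deriv ?_
  rw [hdouble]
  simp only [hfield, sub_mul, sum_sub_distrib, mul_assoc, ← mul_sum]
  ring

theorem oim_energy_is_lyapunov_general (N : ℕ) (W : Fin N → Fin N → ℝ)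
    (hsymm : ∀ i j, W i j = W j i)
    (K Ks : ℝ) (θ : ℝ → Fin N → ℝ) (hθ : Differentiable ℝ θ)
    (hode : ∀ t, deriv θ t = oimField N W K Ks (θ t)) :
    Antitone (fun t : ℝ => oimEnergy N W K Ks (θ t)) := by
  refine antitone_of_hasDerivAt_nonpos (fun t => hasDerivAt_oimEnergy_comp K Ks hsymm
    ((hθ t).hasDerivAt.congr_deriv (hode t)))
    fun _ => mul_nonpos_of_nonpos_of_nonneg (by norm_num) (sum_nonneg fun i _ => mul_self_nonneg _)

/-- The energy function is a Lyapunov function for the OIM dynamics: along any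
differentiable solution of `θ' = f(θ)`, the energy `t ↦ E(θ(t))` is
monotonically nonincreasing on `ℝ`. -/
theorem oim_energy_is_lyapunov (N : ℕ) (W : Fin N → Fin N → ℝ)
    (hsymm : ∀ i j, W i j = W j i) (hdiag : ∀ i, W i i = 0)
    (K Ks : ℝ) (θ : ℝ → Fin N → ℝ) (hθ : Differentiable ℝ θ)
    (hode : ∀ t, deriv θ t = oimField N W K Ks (θ t)) :
    Antitone (fun t : ℝ => oimEnergy N W K Ks (θ t)) :=
  oim_energy_is_lyapunov_general N W hsymm K Ks θ hθ hode
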